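/- Fix an integer d ≥ 2, an index 0 ≤ i ≤ d, a threshold u ∈ ℝ, and κ as below with κ'(1) = 1. Then, as L → ∞, L^{−d/2}·N_i(L,u) converges to η_1^{−d/2}·A_i·(1 − Φ(u)), where A_i := (2√π / Γ((d+1)/2)) · ∫_{ℝ^d} Π(λ)·𝟙_{O_i}(λ)·f_{1/2}(λ) dλ. (Sparse regime of Theorem 3.3.) -/

import Mathlib

open MeasureTheory Filter Real

/-- `K_d := 2^{d/2} ∏_{j=1}^d Γ(j/2)`. -/
noncomputable def Kd (d : ℕ) : ℝ :=
  2 ^ ((d : ℝ) / 2) * ∏ j ∈ Finset.Icc 1 d, Real.Gamma ((j : ℝ) / 2)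

/-- `Π(λ) := ∏_{j=1}^d |λ_j|`. -/
noncomputable def PiAbs (d : ℕ) (lam : Fin d → ℝ) : ℝ := ∏ j, |lam j|

/-- `Δ(λ) := ∏_{1 ≤ h < k ≤ d} |λ_h − λ_k|`. -/
noncomputable def DeltaV (d : ℕ) (lam : Fin d → ℝ) : ℝ :=
  ∏ h : Fin d, ∏ k : Fin d, if h < k then |lam h - lam k| else 1

/-- The density of the ordered eigenvalues of a GOI(c) matrix. -/
noncomputable def fGOI (d : ℕ) (c : ℝ) (lam : Fin d → ℝ) : ℝ :=
  (Kd d * Real.sqrt (1 + d * c))⁻¹ * DeltaV d lam *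
    Real.exp (-(∑ j, lam j ^ 2) / 2 + c * (∑ j, lam j) ^ 2 / (2 * (1 + d * c))) *
    Set.indicator {x : Fin d → ℝ | Monotone x} (fun _ => 1) lam

/-- `O_i := {λ : λ_i < 0 < λ_{i+1}}` with conventions `λ_0 = −∞`, `λ_{d+1} = +∞`
(one-based indexing; coordinates here are zero-based). -/
def Oi (d i : ℕ) : Set (Fin d → ℝ) :=
  {lam | (∀ j : Fin d, (j : ℕ) + 1 = i → lam j < 0) ∧ (∀ j : Fin d, (j : ℕ) = i → 0 < lam j)}

/-- `∫_{ℝ^d} Π(λ)·𝟙_{O_i}(λ)·f_c(λ) dλ`. -/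
noncomputable def GOIint (d i : ℕ) (c : ℝ) : ℝ :=
  ∫ lam : Fin d → ℝ,
    PiAbs d lam * Set.indicator (Oi d i) (fun _ => 1) lam * fGOI d c lam

/-- `η_L := κ_L'(1)/κ_L''(1)` where `κ_L` is the `L`-fold iterate of `κ`. -/
noncomputable def etaL (κ : ℝ → ℝ) (L : ℕ) : ℝ :=
  deriv (κ^[L]) 1 / deriv (deriv (κ^[L])) 1

/-- The Kac–Rice expression for the expected number of critical points of index `i`
of the depth-`L` limiting field on `S^d`. -/
noncomputable def Mcrit (d i : ℕ) (κ : ℝ → ℝ) (L : ℕ) : ℝ :=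
  2 * Real.sqrt π / Real.Gamma (((d : ℝ) + 1) / 2) * etaL κ L ^ (-(d : ℝ) / 2) *
    GOIint d i ((1 + etaL κ L) / 2)

/-- `ξ_L := κ_L'(1)²/κ_L''(1)`. -/
noncomputable def xiL (κ : ℝ → ℝ) (L : ℕ) : ℝ :=
  deriv (κ^[L]) 1 ^ 2 / deriv (deriv (κ^[L])) 1

/-- The standard Gaussian density. -/
noncomputable def stdPhi (x : ℝ) : ℝ := Real.exp (-x ^ 2 / 2) / Real.sqrt (2 * π)

/-- The standard Gaussian cumulative distribution function. -/
noncomputable def stdCDF (u : ℝ) : ℝ := ∫ x in Set.Iic u, stdPhi x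

/-- `∫_u^∞ φ(x)·(∫_{ℝ^d} Π(λ_{ξ,x})·𝟙_{O_i}(λ_{ξ,x})·f_c(λ) dλ) dx`, where
`λ_{ξ,x}` has components `λ_j − ξ·x/√2`. -/
noncomputable def GOIintShift (d i : ℕ) (c ξ u : ℝ) : ℝ :=
  ∫ x in Set.Ioi u, stdPhi x *
    ∫ lam : Fin d → ℝ,
      PiAbs d (fun j => lam j - ξ * x / Real.sqrt 2) *
        Set.indicator (Oi d i) (fun _ => 1) (fun j => lam j - ξ * x / Real.sqrt 2) *
        fGOI d c lam

/-- The Kac–Rice expression for the expected number of critical points of index `i`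
above level `u` of the depth-`L` limiting field on `S^d`. -/
noncomputable def Ncrit (d i : ℕ) (κ : ℝ → ℝ) (u : ℝ) (L : ℕ) : ℝ :=
  2 * Real.sqrt π / Real.Gamma (((d : ℝ) + 1) / 2) * etaL κ L ^ (-(d : ℝ) / 2) *
    GOIintShift d i ((1 + etaL κ L - xiL κ L) / 2) (xiL κ L) u

/-!
When `κ'(1) = 1` the chain rule at the fixed point `1` gives `κ_L'(1) = 1` and
`κ_L''(1) = L κ''(1)`, so `η_L = ξ_L = 1 / (L κ''(1))`. Hence the GOI parameter
`(1 + η_L - ξ_L) / 2` is constantly `1/2`, the prefactor `L^{-d/2} η_L^{-d/2}` is constantly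
`η_1^{-d/2}`, and `L` only enters through the eigenvalue shift `ξ_L x / √2`, which tends to `0`.
The Kac–Rice integral is continuous in this shift by dominated convergence: the integrand is
bounded by `(1 + |s|)^d` times a fixed polynomial-times-Gaussian weight, and the indicator of
`O_i` is continuous off the coordinate hyperplanes, a null set.
-/

open Topology

section Iterate

variable {𝕜 : Type*} [NontriviallyNormedField 𝕜]

theorem ContDiff.iterate {E : Type*} [NormedAddCommGroup E] [NormedSpace 𝕜 E]
    {n : WithTop ℕ∞} {f : E → E} (hf : ContDiff 𝕜 n f) (k : ℕ) : ContDiff 𝕜 n f^[k] := by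
  induction k with
  | zero => exact contDiff_id
  | succ k ih => rw [Function.iterate_succ']; exact hf.comp ih

theorem deriv_iterate_of_fixed {f : 𝕜 → 𝕜} {x : 𝕜} (hf : DifferentiableAt 𝕜 f x)
    (hx : f x = x) (n : ℕ) : deriv f^[n] x = deriv f x ^ n :=
  (HasDerivAt.iterate (x := x) hf.hasDerivAt hx n).deriv

theorem deriv_deriv_iterate_of_fixed_of_deriv_eq_one {f : 𝕜 → 𝕜} {x : 𝕜}
    (hf : ContDiff 𝕜 2 f) (hx : f x = x) (hf' : deriv f x = 1) (n : ℕ) :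
    deriv (deriv f^[n]) x = n * deriv (deriv f) x := by
  have hdiff : Differentiable 𝕜 f := hf.differentiable two_ne_zero
  have hdiff' : ∀ g : 𝕜 → 𝕜, ContDiff 𝕜 2 g → Differentiable 𝕜 (deriv g) := fun g hg =>
    (hg.iterate_deriv' 1 1).differentiable one_ne_zero
  induction n with
  | zero => simp
  | succ n ih =>
    have hchain : deriv f^[n + 1] = (deriv f^[n] ∘ f) * deriv f := by
      ext y
      rw [Function.iterate_succ, deriv_comp y ((hf.iterate n).differentiable two_ne_zero _)
        (hdiff y)]
      rfl
    rw [hchain, deriv_mul ((hdiff' _ (hf.iterate n) _).comp x (hdiff x)) (hdiff' f hf x),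
      deriv_comp x (hdiff' _ (hf.iterate n) _) (hdiff x), hx, ih,
      Function.comp_apply, hx, deriv_iterate_of_fixed (hdiff x) hx, hf']
    push_cast
    ring

end Iterate

theorem integrable_one_add_abs_pow_mul_exp_neg_mul_sq (m : ℕ) {b : ℝ} (hb : 0 < b) :
    Integrable fun x : ℝ => (1 + |x|) ^ m * exp (-b * x ^ 2) := by
  have hpow (k : ℕ) : Integrable fun x : ℝ => |x| ^ k * exp (-b * x ^ 2) := by
    simpa [abs_mul, abs_of_pos (exp_pos _), Real.rpow_natCast] using
      (integrable_rpow_mul_exp_neg_mul_sq hb (s := k) (by linarith [k.cast_nonneg (α := ℝ)])).abs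
  simp_rw [add_pow, one_pow, one_mul, Finset.sum_mul]
  exact integrable_finsetSum _ fun k _ => by
    simpa only [mul_right_comm] using (hpow (m - k)).mul_const (m.choose k : ℝ)

theorem stdPhi_eq_gaussianPDFReal : stdPhi = ProbabilityTheory.gaussianPDFReal 0 1 := by
  ext x
  simp [stdPhi, ProbabilityTheory.gaussianPDFReal, div_eq_inv_mul]

theorem integral_Ioi_stdPhi (u : ℝ) : ∫ x in Set.Ioi u, stdPhi x = 1 - stdCDF u := by
  have hint : Integrable stdPhi := by
    rw [stdPhi_eq_gaussianPDFReal]; exact ProbabilityTheory.integrable_gaussianPDFReal 0 1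
  have htotal : ∫ x, stdPhi x = 1 := by
    rw [stdPhi_eq_gaussianPDFReal]
    exact ProbabilityTheory.integral_gaussianPDFReal_eq_one 0 one_ne_zero
  rw [stdCDF, ← htotal, ← intervalIntegral.integral_Iic_add_Ioi hint.integrableOn
    hint.integrableOn]
  ring

section GOI

variable {d : ℕ}

theorem isOpen_Oi (i : ℕ) : IsOpen (Oi d i) := by
  simp only [Oi, Set.ofPred_and, Set.ofPred_forall]
  refine (isOpen_iInter_of_finite fun j => ?_).inter (isOpen_iInter_of_finite fun j => ?_)
  · by_cases h : (j : ℕ) + 1 = i <;> simp [h, isOpen_lt (continuous_apply j) continuous_const]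
  · by_cases h : (j : ℕ) = i <;> simp [h, isOpen_lt continuous_const (continuous_apply j)]

theorem continuousAt_indicator_Oi (i : ℕ) {w : Fin d → ℝ} (hw : ∀ j, w j ≠ 0) :
    ContinuousAt (Set.indicator (Oi d i) fun _ => (1 : ℝ)) w := by
  have hsign : ∀ᶠ v in 𝓝 w, ∀ j, (v j < 0 ↔ w j < 0) ∧ (0 < v j ↔ 0 < w j) := by
    refine eventually_all.2 fun j => ?_
    have hcont := (continuous_apply j).continuousAt (x := w)
    rcases (hw j).lt_or_gt with hneg | hpos
    · filter_upwards [hcont.eventually (gt_mem_nhds hneg)] with v hv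
      exact ⟨iff_of_true hv hneg, iff_of_false hv.not_gt hneg.not_gt⟩
    · filter_upwards [hcont.eventually (lt_mem_nhds hpos)] with v hv
      exact ⟨iff_of_false hv.not_gt hpos.not_gt, iff_of_true hv hpos⟩
  refine (continuousAt_const (y := Set.indicator (Oi d i) (fun _ => (1 : ℝ)) w)).congr
    (hsign.mono fun v hv => ?_)
  have hmem : v ∈ Oi d i ↔ w ∈ Oi d i := by
    simp only [Oi, Set.mem_ofPred_eq, fun j => (hv j).1, fun j => (hv j).2]
  classical
  simp only [Set.indicator_apply, hmem]

theorem ae_forall_apply_ne (a : ℝ) : ∀ᵐ lam : Fin d → ℝ, ∀ j, lam j ≠ a :=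
  ae_all_iff.2 fun j => by
    simpa [ae_iff, volume_pi] using
      Measure.pi_hyperplane (fun _ : Fin d => (volume : Measure ℝ)) j a

theorem continuous_PiAbs : Continuous (PiAbs d) := by
  unfold PiAbs
  fun_prop

theorem continuous_DeltaV : Continuous (DeltaV d) := by
  unfold DeltaV
  refine continuous_finsetProd _ fun h _ => continuous_finsetProd _ fun k _ => ?_
  split_ifs <;> fun_prop

theorem measurable_fGOI (c : ℝ) : Measurable (fGOI d c) := by
  unfold fGOI
  exact ((continuous_const.mul continuous_DeltaV).mul (by fun_prop)).measurable.mul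
    (measurable_const.indicator isClosed_monotone.measurableSet)

theorem Kd_pos (d : ℕ) : 0 < Kd d :=
  mul_pos (by positivity) (Finset.prod_pos fun j hj =>
    Real.Gamma_pos_of_pos (div_pos (Nat.cast_pos.2 (Finset.mem_Icc.1 hj).1) two_pos))

theorem DeltaV_nonneg (lam : Fin d → ℝ) : 0 ≤ DeltaV d lam :=
  Finset.prod_nonneg fun h _ => Finset.prod_nonneg fun k _ => by split_ifs <;> positivity

theorem fGOI_nonneg (c : ℝ) (lam : Fin d → ℝ) : 0 ≤ fGOI d c lam := by
  have := Kd_pos d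
  have := DeltaV_nonneg lam
  unfold fGOI
  exact mul_nonneg (by positivity) (Set.indicator_nonneg (fun _ _ => zero_le_one) _)

theorem PiAbs_sub_le (lam : Fin d → ℝ) (s : ℝ) :
    PiAbs d (fun j => lam j - s) ≤ (1 + |s|) ^ d * ∏ j, (1 + |lam j|) := by
  calc PiAbs d (fun j => lam j - s) ≤ ∏ j, (1 + |s|) * (1 + |lam j|) :=
        Finset.prod_le_prod (fun _ _ => abs_nonneg _) fun j _ => by
          nlinarith [abs_sub (lam j) s, abs_nonneg (lam j), abs_nonneg s]
    _ = (1 + |s|) ^ d * ∏ j, (1 + |lam j|) := by simp [Finset.prod_mul_distrib]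

theorem DeltaV_le (lam : Fin d → ℝ) : DeltaV d lam ≤ ∏ j, (1 + |lam j|) ^ (2 * d) := by
  calc DeltaV d lam ≤ ∏ h : Fin d, ∏ k : Fin d, (1 + |lam h|) * (1 + |lam k|) := by
        refine Finset.prod_le_prod (fun h _ => ?_) fun h _ =>
          Finset.prod_le_prod (fun k _ => ?_) fun k _ => ?_
        · exact Finset.prod_nonneg fun k _ => by split_ifs <;> positivity
        · split_ifs <;> positivity
        · split_ifs
          · nlinarith [abs_sub (lam h) (lam k), abs_nonneg (lam h), abs_nonneg (lam k)]
          · nlinarith [abs_nonneg (lam h), abs_nonneg (lam k)]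
    _ = ∏ j, (1 + |lam j|) ^ (2 * d) := by
        simp only [Finset.prod_mul_distrib, Finset.prod_const, Finset.card_univ,
          Fintype.card_fin, Finset.prod_pow]
        ring

theorem fGOI_exponent_le {c : ℝ} (hc : 0 ≤ c) (lam : Fin d → ℝ) :
    -(∑ j, lam j ^ 2) / 2 + c * (∑ j, lam j) ^ 2 / (2 * (1 + d * c)) ≤
      ∑ j, -(2 * (1 + d * c))⁻¹ * lam j ^ 2 := by
  have hCS : c * (∑ j, lam j) ^ 2 ≤ c * (d * ∑ j, lam j ^ 2) :=
    mul_le_mul_of_nonneg_left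
      (by simpa using sq_sum_le_card_mul_sum_sq (s := Finset.univ) (f := lam)) hc
  rw [← Finset.mul_sum]
  field_simp
  nlinarith

theorem fGOI_le {c : ℝ} (hc : 0 ≤ c) (lam : Fin d → ℝ) :
    fGOI d c lam ≤ (Kd d * √(1 + d * c))⁻¹ *
      ∏ j, (1 + |lam j|) ^ (2 * d) * exp (-(2 * (1 + d * c))⁻¹ * lam j ^ 2) := by
  have hind : Set.indicator {x : Fin d → ℝ | Monotone x} (fun _ => (1 : ℝ)) lam ≤ 1 :=
    Set.indicator_apply_le' (fun _ => le_rfl) fun _ => zero_le_one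
  have := Kd_pos d
  rw [Finset.prod_mul_distrib, ← Real.exp_sum, ← mul_assoc]
  unfold fGOI
  have := DeltaV_nonneg lam
  calc _ ≤ (Kd d * √(1 + d * c))⁻¹ * DeltaV d lam *
        exp (-(∑ j, lam j ^ 2) / 2 + c * (∑ j, lam j) ^ 2 / (2 * (1 + d * c))) * 1 :=
        mul_le_mul_of_nonneg_left hind (by positivity)
    _ ≤ _ := by
        rw [mul_one]
        exact mul_le_mul (mul_le_mul_of_nonneg_left (DeltaV_le lam) (by positivity))
          (exp_le_exp.2 (fGOI_exponent_le hc lam)) (by positivity) (by positivity)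

noncomputable def goiWeight (d : ℕ) (c : ℝ) (lam : Fin d → ℝ) : ℝ :=
  ∏ j, (1 + |lam j|) ^ (2 * d + 1) * exp (-(2 * (1 + d * c))⁻¹ * lam j ^ 2)

theorem goiWeight_nonneg (c : ℝ) (lam : Fin d → ℝ) : 0 ≤ goiWeight d c lam := by
  unfold goiWeight
  positivity

theorem integrable_goiWeight {c : ℝ} (hc : 0 ≤ c) : Integrable (goiWeight d c) :=
  Integrable.fintype_prod fun _ =>
    integrable_one_add_abs_pow_mul_exp_neg_mul_sq _ (by positivity)

noncomputable def shiftedGOIIntegrand (d i : ℕ) (c s : ℝ) (lam : Fin d → ℝ) : ℝ :=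
  PiAbs d (fun j => lam j - s) * Set.indicator (Oi d i) (fun _ => 1) (fun j => lam j - s) *
    fGOI d c lam

variable (i : ℕ)

theorem shiftedGOIIntegrand_nonneg (c s : ℝ) (lam : Fin d → ℝ) :
    0 ≤ shiftedGOIIntegrand d i c s lam :=
  mul_nonneg (mul_nonneg (Finset.prod_nonneg fun _ _ => abs_nonneg _)
    (Set.indicator_nonneg (fun _ _ => zero_le_one) _)) (fGOI_nonneg c lam)

theorem shiftedGOIIntegrand_le {c : ℝ} (hc : 0 ≤ c) (s : ℝ) (lam : Fin d → ℝ) :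
    shiftedGOIIntegrand d i c s lam ≤
      (Kd d * √(1 + d * c))⁻¹ * (1 + |s|) ^ d * goiWeight d c lam := by
  have hind : Set.indicator (Oi d i) (fun _ => (1 : ℝ)) (fun j => lam j - s) ≤ 1 :=
    Set.indicator_apply_le' (fun _ => le_rfl) fun _ => zero_le_one
  calc shiftedGOIIntegrand d i c s lam
      ≤ (1 + |s|) ^ d * (∏ j, (1 + |lam j|)) * 1 * ((Kd d * √(1 + d * c))⁻¹ *
          ∏ j, (1 + |lam j|) ^ (2 * d) * exp (-(2 * (1 + d * c))⁻¹ * lam j ^ 2)) := by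
        have := Kd_pos d
        exact mul_le_mul (mul_le_mul (PiAbs_sub_le lam s) hind
          (Set.indicator_nonneg (fun _ _ => zero_le_one) _) (by positivity))
          (fGOI_le hc lam) (fGOI_nonneg c lam) (by positivity)
    _ = _ := by
        simp only [goiWeight, pow_succ, Finset.prod_mul_distrib]
        ring

theorem measurable_shiftedGOIIntegrand (c s : ℝ) :
    Measurable (shiftedGOIIntegrand d i c s) := by
  have hshift : Continuous fun lam : Fin d → ℝ => fun j => lam j - s := by fun_prop
  exact ((continuous_PiAbs.comp hshift).measurable.mul
    ((measurable_const.indicator (isOpen_Oi i).measurableSet).comp hshift.measurable)).mul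
    (measurable_fGOI c)

theorem exists_norm_integral_shiftedGOIIntegrand_le {c : ℝ} (hc : 0 ≤ c) :
    ∃ A, 0 ≤ A ∧ ∀ s, ‖∫ lam, shiftedGOIIntegrand d i c s lam‖ ≤ A * (1 + |s|) ^ d := by
  have := Kd_pos d
  refine ⟨(Kd d * √(1 + d * c))⁻¹ * ∫ lam, goiWeight d c lam,
    mul_nonneg (by positivity) (integral_nonneg (goiWeight_nonneg c)),
    fun s => ?_⟩
  calc ‖∫ lam, shiftedGOIIntegrand d i c s lam‖
      ≤ ∫ lam, (Kd d * √(1 + d * c))⁻¹ * (1 + |s|) ^ d * goiWeight d c lam :=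
        norm_integral_le_of_norm_le ((integrable_goiWeight hc).const_mul _) (ae_of_all _ fun lam =>
          by rw [Real.norm_of_nonneg (shiftedGOIIntegrand_nonneg i c s lam)]
             exact shiftedGOIIntegrand_le i hc s lam)
    _ = _ := by rw [integral_const_mul]; ring

theorem continuous_integral_shiftedGOIIntegrand {c : ℝ} (hc : 0 ≤ c) :
    Continuous fun s => ∫ lam, shiftedGOIIntegrand d i c s lam := by
  refine continuous_iff_continuousAt.2 fun s₀ => continuousAt_of_dominated
    (bound := fun lam => (Kd d * √(1 + d * c))⁻¹ * (2 + |s₀|) ^ d * goiWeight d c lam)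
    (Eventually.of_forall fun s => (measurable_shiftedGOIIntegrand i c s).aestronglyMeasurable)
    ?_ ((integrable_goiWeight hc).const_mul _) ?_
  · have := Kd_pos d
    filter_upwards [Metric.closedBall_mem_nhds s₀ one_pos] with s hs
    refine ae_of_all _ fun lam => ?_
    rw [Real.norm_of_nonneg (shiftedGOIIntegrand_nonneg i c s lam)]
    refine (shiftedGOIIntegrand_le i hc s lam).trans ?_
    have hs' : 1 + |s| ≤ 2 + |s₀| := by
      have := abs_sub_abs_le_abs_sub s s₀
      rw [Metric.mem_closedBall, Real.dist_eq] at hs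
      linarith
    exact mul_le_mul_of_nonneg_right (mul_le_mul_of_nonneg_left
      (pow_le_pow_left₀ (by positivity) hs' d) (by positivity)) (goiWeight_nonneg c lam)
  · filter_upwards [ae_forall_apply_ne s₀] with lam hlam
    have hshift : Continuous fun s : ℝ => fun j => lam j - s := by fun_prop
    exact ((continuous_PiAbs.comp hshift).continuousAt.mul
      ((continuousAt_indicator_Oi i fun j => sub_ne_zero.2 (hlam j)).comp
        hshift.continuousAt)).mul continuousAt_const

theorem continuous_stdPhi : Continuous stdPhi := by
  unfold stdPhi
  fun_prop

theorem stdPhi_nonneg (x : ℝ) : 0 ≤ stdPhi x := by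
  unfold stdPhi
  positivity

theorem integrable_one_add_abs_pow_mul_stdPhi (m : ℕ) :
    Integrable fun x => (1 + |x|) ^ m * stdPhi x := by
  have h := (integrable_one_add_abs_pow_mul_exp_neg_mul_sq m (b := 1 / 2) one_half_pos).div_const
    √(2 * π)
  refine h.congr (ae_of_all _ fun x => ?_)
  simp only [stdPhi]
  ring_nf

theorem continuous_GOIintShift {c : ℝ} (hc : 0 ≤ c) (u : ℝ) :
    Continuous fun ξ => GOIintShift d i c ξ u := by
  obtain ⟨A, hA0, hA⟩ := exists_norm_integral_shiftedGOIIntegrand_le (d := d) i hc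
  have hI := continuous_integral_shiftedGOIIntegrand (d := d) i hc
  refine continuous_iff_continuousAt.2 fun ξ₀ => continuousAt_of_dominated
    (bound := fun x => A * (2 + |ξ₀|) ^ d * ((1 + |x|) ^ d * stdPhi x))
    (Eventually.of_forall fun ξ =>
      (continuous_stdPhi.mul (hI.comp (by fun_prop))).aestronglyMeasurable)
    ?_ (((integrable_one_add_abs_pow_mul_stdPhi d).const_mul _).restrict)
    (ae_of_all _ fun x => (continuous_const.mul
      (hI.comp (by fun_prop : Continuous fun ξ : ℝ => ξ * x / √2))).continuousAt)
  filter_upwards [Metric.closedBall_mem_nhds ξ₀ one_pos] with ξ hξ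
  refine ae_of_all _ fun x => ?_
  have hξ' : |ξ| ≤ 1 + |ξ₀| := by
    have := abs_sub_abs_le_abs_sub ξ ξ₀
    rw [Metric.mem_closedBall, Real.dist_eq] at hξ
    linarith
  have hshift : |ξ * x / √2| ≤ |ξ| * |x| := by
    rw [abs_div, abs_mul, abs_of_pos (by positivity : (0 : ℝ) < √2)]
    exact div_le_self (by positivity) (Real.one_le_sqrt.2 one_le_two)
  have hgrowth : 1 + |ξ * x / √2| ≤ (2 + |ξ₀|) * (1 + |x|) := by
    nlinarith [abs_nonneg x, abs_nonneg ξ₀]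
  rw [norm_mul, Real.norm_of_nonneg (stdPhi_nonneg x)]
  calc stdPhi x * ‖∫ lam, shiftedGOIIntegrand d i c (ξ * x / √2) lam‖
      ≤ stdPhi x * (A * ((2 + |ξ₀|) * (1 + |x|)) ^ d) :=
        mul_le_mul_of_nonneg_left ((hA _).trans (mul_le_mul_of_nonneg_left
          (pow_le_pow_left₀ (by positivity) hgrowth d) hA0)) (stdPhi_nonneg x)
    _ = A * (2 + |ξ₀|) ^ d * ((1 + |x|) ^ d * stdPhi x) := by rw [mul_pow]; ring

theorem GOIintShift_zero (c u : ℝ) : GOIintShift d i c 0 u = (1 - stdCDF u) * GOIint d i c := by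
  simp only [GOIintShift, zero_mul, zero_div, sub_zero]
  rw [integral_mul_const, integral_Ioi_stdPhi]
  rfl

end GOI

section Sparse

variable {κ : ℝ → ℝ} (hsmooth : ContDiff ℝ 2 κ) (hfix : κ 1 = 1) (hsparse : deriv κ 1 = 1)
include hsmooth hfix hsparse

theorem etaL_of_deriv_eq_one (L : ℕ) : etaL κ L = (L * deriv (deriv κ) 1)⁻¹ := by
  rw [etaL, deriv_iterate_of_fixed (hsmooth.differentiable two_ne_zero 1) hfix, hsparse, one_pow,
    deriv_deriv_iterate_of_fixed_of_deriv_eq_one hsmooth hfix hsparse, one_div]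

theorem xiL_of_deriv_eq_one (L : ℕ) : xiL κ L = (L * deriv (deriv κ) 1)⁻¹ := by
  rw [xiL, deriv_iterate_of_fixed (hsmooth.differentiable two_ne_zero 1) hfix, hsparse, one_pow,
    one_pow, deriv_deriv_iterate_of_fixed_of_deriv_eq_one hsmooth hfix hsparse, one_div]

end Sparse

theorem statement4_general (d i : ℕ) (u : ℝ) (κ : ℝ → ℝ)
    (hsmooth : ContDiff ℝ 2 κ) (hfix : κ 1 = 1)
    (hpos2 : 0 < deriv (deriv κ) 1)
    (hsparse : deriv κ 1 = 1) :
    Tendsto (fun L : ℕ => (L : ℝ) ^ (-(d : ℝ) / 2) * Ncrit d i κ u L) atTop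
      (nhds ((deriv κ 1 / deriv (deriv κ) 1) ^ (-(d : ℝ) / 2) *
        (2 * Real.sqrt π / Real.Gamma (((d : ℝ) + 1) / 2) * GOIint d i (1 / 2)) *
        (1 - stdCDF u))) := by
  set e : ℝ := -(d : ℝ) / 2
  set C := 2 * Real.sqrt π / Real.Gamma (((d : ℝ) + 1) / 2)
  have hscale : ∀ L : ℕ, 0 < L → (L : ℝ) ^ e * Ncrit d i κ u L =
      (1 / deriv (deriv κ) 1) ^ e * C *
        GOIintShift d i (1 / 2) (L * deriv (deriv κ) 1)⁻¹ u := by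
    intro L hL
    have hrpow : (L : ℝ) ^ e * ((L * deriv (deriv κ) 1)⁻¹) ^ e = (1 / deriv (deriv κ) 1) ^ e := by
      rw [← Real.mul_rpow (by positivity) (by positivity)]
      field_simp
    rw [Ncrit, etaL_of_deriv_eq_one hsmooth hfix hsparse,
      xiL_of_deriv_eq_one hsmooth hfix hsparse, add_sub_cancel_right, ← hrpow]
    ring
  have hξ : Tendsto (fun L : ℕ => ((L : ℝ) * deriv (deriv κ) 1)⁻¹) atTop (𝓝 0) :=
    tendsto_inv_atTop_zero.comp (tendsto_natCast_atTop_atTop.atTop_mul_const hpos2)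
  have hlim := ((continuous_GOIintShift (d := d) i (by norm_num : (0 : ℝ) ≤ 1 / 2) u).tendsto
    0).comp hξ
  rw [GOIintShift_zero] at hlim
  rw [hsparse]
  convert (hlim.const_mul ((1 / deriv (deriv κ) 1) ^ e * C)).congr'
    ((eventually_gt_atTop 0).mono fun L hL => (hscale L hL).symm) using 2
  ring

/-- Sparse regime of Theorem 3.3: if `κ'(1) = 1` then `L^{−d/2}·N_i(L,u)` converges to
`η_1^{−d/2}·A_i·(1−Φ(u))`. -/
theorem statement4 (d i : ℕ) (hd : 2 ≤ d) (hi : i ≤ d) (u : ℝ) (κ : ℝ → ℝ)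
    (hsmooth : ContDiff ℝ 2 κ) (hfix : κ 1 = 1)
    (hpos1 : 0 < deriv κ 1) (hpos2 : 0 < deriv (deriv κ) 1)
    (hjensen : deriv κ 1 * (deriv κ 1 - 1) ≤ deriv (deriv κ) 1)
    (hsparse : deriv κ 1 = 1) :
    Tendsto (fun L : ℕ => (L : ℝ) ^ (-(d : ℝ) / 2) * Ncrit d i κ u L) atTop
      (nhds ((deriv κ 1 / deriv (deriv κ) 1) ^ (-(d : ℝ) / 2) *
        (2 * Real.sqrt π / Real.Gamma (((d : ℝ) + 1) / 2) * GOIint d i (1 / 2)) *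
        (1 - stdCDF u))) :=
  statement4_general d i u κ hsmooth hfix hpos2 hsparse
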